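/- arXiv:1309.4046 — 6 statements merged into one kernel-verified Lean document; each statement's English description precedes it below -/
import Mathlib

section
/- Let φ : [0,1] → ℝ be convex, continuous on [0,1] and differentiable on (0,1). Then the function x ↦ x·φ'(x) has a finite limit as x → 0⁺, i.e. x·φ'(x) converges as x → 0⁺. -/
open Set

/-- For a convex function `φ` on `[0,1]`, continuous on `[0,1]` and differentiable on `(0,1)`,
the function `x ↦ x * φ'(x)` has a finite limit as `x → 0⁺`. -/
theorem xphi_deriv_limit_at_zero (φ : ℝ → ℝ)
    (hcont : ContinuousOn φ (Icc 0 1))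
    (hdiff : DifferentiableOn ℝ φ (Ioo 0 1))
    (hconv : ConvexOn ℝ (Icc 0 1) φ) :
    ∃ L : ℝ, Filter.Tendsto (fun x : ℝ => x * deriv φ x)
      (nhdsWithin 0 (Ioi 0)) (nhds L) := by
  refine ⟨0, ?_⟩
  have h0 : (0:ℝ) ∈ Icc (0:ℝ) 1 := ⟨le_refl _, zero_le_one⟩
  -- continuity of φ at 0 from the right
  have hφ0 : Filter.Tendsto φ (nhdsWithin 0 (Ioi 0)) (nhds (φ 0)) := by
    have := (hcont 0 h0).tendsto
    rw [← nhdsWithin_Ioo_eq_nhdsGT (show (0:ℝ) < 1 by norm_num)]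
    exact this.mono_left (nhdsWithin_mono _ Ioo_subset_Icc_self)
  -- φ(2x) → φ 0
  have h2x : Filter.Tendsto (fun x : ℝ => (2:ℝ) * x) (nhdsWithin 0 (Ioi 0))
      (nhdsWithin 0 (Ioi 0)) := by
    apply tendsto_nhdsWithin_of_tendsto_nhds_of_eventually_within
    · have : Filter.Tendsto (fun x : ℝ => (2:ℝ) * x) (nhds 0) (nhds ((2:ℝ) * 0)) :=
        (continuous_const.mul continuous_id).tendsto 0
      simpa using this.mono_left nhdsWithin_le_nhds
    · filter_upwards [self_mem_nhdsWithin] with x hx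
      exact mul_pos two_pos (mem_Ioi.mp hx)
  have hφ2x : Filter.Tendsto (fun x : ℝ => φ (2 * x)) (nhdsWithin 0 (Ioi 0)) (nhds (φ 0)) :=
    hφ0.comp h2x
  have hg : Filter.Tendsto (fun x : ℝ => φ x - φ 0) (nhdsWithin 0 (Ioi 0)) (nhds 0) := by
    simpa using hφ0.sub_const (φ 0)
  have hh : Filter.Tendsto (fun x : ℝ => φ (2 * x) - φ x) (nhdsWithin 0 (Ioi 0)) (nhds 0) := by
    simpa using hφ2x.sub hφ0
  refine tendsto_of_tendsto_of_tendsto_of_le_of_le' hg hh ?_ ?_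
  · -- φ x - φ 0 ≤ x * deriv φ x eventually
    filter_upwards [Ioo_mem_nhdsGT_of_mem (by norm_num : (0:ℝ) ∈ Ico (0:ℝ) (1/2))]
      with x hx
    have hx1 : x ∈ Ioo (0:ℝ) 1 := ⟨hx.1, hx.2.trans (by norm_num)⟩
    have hdx : DifferentiableAt ℝ φ x := hdiff.differentiableAt (Ioo_mem_nhds hx1.1 hx1.2)
    have := hconv.slope_le_deriv h0 ⟨hx1.1.le, hx1.2.le⟩ hx1.1 hdx
    rw [slope_def_field] at this
    have : (φ x - φ 0) / (x - 0) ≤ deriv φ x := by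
      simpa [div_eq_inv_mul] using this
    rw [sub_zero] at this
    calc φ x - φ 0 = x * ((φ x - φ 0) / x) := by
          rw [mul_div_cancel₀ _ hx.1.ne']
      _ ≤ x * deriv φ x := mul_le_mul_of_nonneg_left this hx.1.le
  · -- x * deriv φ x ≤ φ (2x) - φ x eventually
    filter_upwards [Ioo_mem_nhdsGT_of_mem (by norm_num : (0:ℝ) ∈ Ico (0:ℝ) (1/2))]
      with x hx
    have hx1 : x ∈ Ioo (0:ℝ) 1 := ⟨hx.1, hx.2.trans (by norm_num)⟩
    have h2x1 : (2:ℝ) * x ∈ Icc (0:ℝ) 1 := by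
      constructor <;> nlinarith [hx.1, hx.2]
    have hdx : DifferentiableAt ℝ φ x := hdiff.differentiableAt (Ioo_mem_nhds hx1.1 hx1.2)
    have hlt : x < 2 * x := by linarith [hx.1]
    have := hconv.deriv_le_slope ⟨hx1.1.le, hx1.2.le⟩ h2x1 hlt hdx
    rw [slope_def_field] at this
    have h' : deriv φ x ≤ (φ (2 * x) - φ x) / x := by
      have hx2 : (2:ℝ) * x - x = x := by ring
      simpa [hx2] using this
    calc x * deriv φ x ≤ x * ((φ (2 * x) - φ x) / x) :=
          mul_le_mul_of_nonneg_left h' hx.1.le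
      _ = φ (2 * x) - φ x := by rw [mul_div_cancel₀ _ hx.1.ne']
end

section
/- Klein's lemma: Let a ≤ b be reals, K ∈ ℕ, and f_k, g_k : [a,b] → ℝ measurable functions (k = 1,…,K) such that ∑_{k=1}^K f_k(x)·g_k(y) ≥ 0 for all x, y ∈ [a,b]. Then for all Hermitian N×N matrices A, B with spectra contained in [a,b], we have ∑_{k=1}^K tr(f_k(A)·g_k(B)) ≥ 0, where f_k(A), g_k(B) are defined by the functional calculus. -/
open Set ComplexOrder

/-
In eigenbases of `A` and `B`, with `W = Uᴬ* Uᴮ` the unitary change of basis,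
`tr (f(A) g(B)) = ∑ᵢⱼ f(λᵢ) g(μⱼ) |Wᵢⱼ|²`. Summing over `k`, each coefficient
`∑ₖ fₖ(λᵢ) gₖ(μⱼ)` is nonnegative because the eigenvalues lie in `[a,b]`.
-/

namespace Matrix

variable {n R : Type*} [Fintype n] [DecidableEq n] [CommRing R]

theorem trace_diagonal_mul_mul_diagonal_mul (d e : n → R) (W X : Matrix n n R) :
    (diagonal d * W * diagonal e * X).trace = ∑ i, ∑ j, d i * W i j * e j * X j i := by
  have hscale (i j : n) : (diagonal d * W * diagonal e) i j = d i * W i j * e j := by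
    rw [mul_diagonal, diagonal_mul]
  simp only [trace, diag, mul_apply, hscale]

theorem trace_conj_diagonal_mul_conj_diagonal [StarRing R] (U V : Matrix n n R) (d e : n → R) :
    ((U * diagonal d * star U) * (V * diagonal e * star V)).trace
      = ∑ i, ∑ j, d i * e j * ((star U * V) i j * star ((star U * V) i j)) := by
  have hcycle : ((U * diagonal d * star U) * (V * diagonal e * star V)).trace
      = (diagonal d * (star U * V) * diagonal e * star (star U * V)).trace := by
    rw [star_mul, star_star]
    simp only [mul_assoc]
    rw [trace_mul_comm U]
    simp only [mul_assoc]
  rw [hcycle, trace_diagonal_mul_mul_diagonal_mul]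
  simp only [star_apply]
  exact Finset.sum_congr rfl fun i _ => Finset.sum_congr rfl fun j _ => by ring

end Matrix

namespace Matrix.IsHermitian

variable {n 𝕜 : Type*} [Fintype n] [DecidableEq n] [RCLike 𝕜]
  {A B : Matrix n n 𝕜} (hA : A.IsHermitian) (hB : B.IsHermitian)

theorem trace_cfc_mul_cfc (f g : ℝ → ℝ) :
    (cfc f A * cfc g B).trace
      = ∑ i, ∑ j, ((f (hA.eigenvalues i) * g (hB.eigenvalues j) *
          ‖(star (hA.eigenvectorUnitary : Matrix n n 𝕜) * hB.eigenvectorUnitary) i j‖ ^ 2 : ℝ) : 𝕜) := by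
  simp only [hA.cfc_eq, hB.cfc_eq, IsHermitian.cfc, Unitary.conjStarAlgAut_apply,
    trace_conj_diagonal_mul_conj_diagonal, Function.comp_apply, RCLike.star_def, RCLike.mul_conj,
    RCLike.ofReal_mul, RCLike.ofReal_pow]

end Matrix.IsHermitian

theorem klein_lemma_general {N K : ℕ} (a b : ℝ)
    (f g : Fin K → ℝ → ℝ)
    (hpos : ∀ x ∈ Icc a b, ∀ y ∈ Icc a b, 0 ≤ ∑ k : Fin K, f k x * g k y)
    (A B : Matrix (Fin N) (Fin N) ℂ)
    (hA : IsSelfAdjoint A) (hB : IsSelfAdjoint B)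
    (hspecA : spectrum ℝ A ⊆ Icc a b) (hspecB : spectrum ℝ B ⊆ Icc a b) :
    0 ≤ ∑ k : Fin K, (cfc (f k) A * cfc (g k) B).trace := by
  have hA' : A.IsHermitian := hA
  have hB' : B.IsHermitian := hB
  simp only [hA'.trace_cfc_mul_cfc hB']
  rw [Finset.sum_comm]
  refine Finset.sum_nonneg fun i _ => ?_
  rw [Finset.sum_comm]
  refine Finset.sum_nonneg fun j _ => ?_
  rw [← RCLike.ofReal_sum, ← Finset.sum_mul, RCLike.ofReal_nonneg]
  exact mul_nonneg (hpos _ (hspecA (hA'.eigenvalues_mem_spectrum_real i)) _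
    (hspecB (hB'.eigenvalues_mem_spectrum_real j))) (sq_nonneg _)

/-- **Klein's lemma.** If `∑ k, f k x * g k y ≥ 0` for all `x, y ∈ [a,b]`, then
`∑ k, tr (f k (A) * g k (B)) ≥ 0` for all Hermitian matrices `A, B` with spectra in `[a,b]`,
where `f k (A)`, `g k (B)` are given by the continuous functional calculus. -/
theorem klein_lemma {N K : ℕ} (a b : ℝ) (hab : a ≤ b)
    (f g : Fin K → ℝ → ℝ)
    (hfmeas : ∀ k, Measurable (f k)) (hgmeas : ∀ k, Measurable (g k))
    (hpos : ∀ x ∈ Icc a b, ∀ y ∈ Icc a b, 0 ≤ ∑ k : Fin K, f k x * g k y)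
    (A B : Matrix (Fin N) (Fin N) ℂ)
    (hA : IsSelfAdjoint A) (hB : IsSelfAdjoint B)
    (hspecA : spectrum ℝ A ⊆ Icc a b) (hspecB : spectrum ℝ B ⊆ Icc a b) :
    0 ≤ ∑ k : Fin K, (cfc (f k) A * cfc (g k) B).trace :=
  klein_lemma_general a b f g hpos A B hA hB hspecA hspecB
end

section
/- The function h ↦ (h - log(1+h))/h² is monotone decreasing on (-1, ∞) \ {0} (extended by the value 1/2 at h = 0). -/
/-! Differentiating in `t` shows `(h - log (1 + h)) / h² = ∫₀¹ t / (1 + t h) dt` (the value `1/2`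
at `h = 0` included), and for each `t ∈ [0, 1]` the integrand is nonincreasing in `h`. -/

open Set

section IntegralRepresentation

variable {h t : ℝ}

lemma one_add_mul_pos_of_mem_Icc (hh : -1 < h) (ht : t ∈ Icc (0 : ℝ) 1) : 0 < 1 + t * h := by
  rcases le_or_gt 0 h with h0 | h0
  · nlinarith [ht.1]
  · nlinarith [ht.2]

lemma intervalIntegrable_div_one_add_mul (hh : -1 < h) :
    IntervalIntegrable (fun t : ℝ => t / (1 + t * h)) MeasureTheory.volume 0 1 := by
  refine ContinuousOn.intervalIntegrable_of_Icc zero_le_one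
    (continuousOn_id.div (by fun_prop) fun t ht => ?_)
  exact (one_add_mul_pos_of_mem_Icc hh ht).ne'

lemma hasDerivAt_div_sub_log_one_add_mul (h0 : h ≠ 0) (ht : 0 < 1 + t * h) :
    HasDerivAt (fun t => t / h - Real.log (1 + t * h) / h ^ 2) (t / (1 + t * h)) t := by
  have hlin : HasDerivAt (fun t : ℝ => 1 + t * h) h t := by
    simpa using ((hasDerivAt_id t).mul_const h).const_add 1
  refine (((hasDerivAt_id t).div_const h).sub ((hlin.log ht.ne').div_const (h ^ 2))).congr_deriv ?_
  have hne : 1 + h * t ≠ 0 := by linarith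
  field_simp
  ring

lemma sub_log_div_sq_eq_integral (hh : -1 < h) (h0 : h ≠ 0) :
    (h - Real.log (1 + h)) / h ^ 2 = ∫ t in (0 : ℝ)..1, t / (1 + t * h) := by
  have hderiv : ∀ t ∈ uIcc (0 : ℝ) 1,
      HasDerivAt (fun t => t / h - Real.log (1 + t * h) / h ^ 2) (t / (1 + t * h)) t :=
    fun t ht => hasDerivAt_div_sub_log_one_add_mul h0
      (one_add_mul_pos_of_mem_Icc hh (uIcc_of_le (zero_le_one' ℝ) ▸ ht))
  rw [intervalIntegral.integral_eq_sub_of_hasDerivAt hderiv (intervalIntegrable_div_one_add_mul hh)]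
  field_simp
  simp

lemma div_one_add_mul_le_div_one_add_mul {x y : ℝ} (hx : -1 < x) (hxy : x ≤ y)
    (ht : t ∈ Icc (0 : ℝ) 1) : t / (1 + t * y) ≤ t / (1 + t * x) := by
  have hpos := one_add_mul_pos_of_mem_Icc hx ht
  have ht0 : 0 ≤ t := ht.1
  gcongr

end IntegralRepresentation

/-- The function `h ↦ (h - log (1+h)) / h²`, extended by the value `1/2` at `h = 0`,
is monotone nonincreasing on `(-1, ∞)`. -/
theorem sub_log_div_sq_antitone :
    AntitoneOn (fun h : ℝ => if h = 0 then 1 / 2 else (h - Real.log (1 + h)) / h ^ 2)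
      (Ioi (-1)) := by
  have hint : ∀ h ∈ Ioi (-1 : ℝ),
      (if h = 0 then 1 / 2 else (h - Real.log (1 + h)) / h ^ 2)
        = ∫ t in (0 : ℝ)..1, t / (1 + t * h) := by
    intro h hh
    split_ifs with h0
    · simp [h0, integral_id]
    · exact sub_log_div_sq_eq_integral hh h0
  intro x hx y hy hxy
  simp only [hint x hx, hint y hy]
  exact intervalIntegral.integral_mono_on zero_le_one (intervalIntegrable_div_one_add_mul hy)
    (intervalIntegrable_div_one_add_mul hx) fun t ht => div_one_add_mul_le_div_one_add_mul hx hxy ht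
end

section
/- For t ≥ 0 and x, y ∈ [0,1] with t + y > 0, one has −(log(t+x) − log(t+y) − (x−y)/(t+y)) ≥ (x−y)²/(2(1+t)(t+y)). -/
open Set

/-!
Write `r = a / b` for `a = t + x`, `b = t + y`. Below `1`, the Taylor series of `log (1 - s)`
has only negative terms, so `log r ≤ (r - 1) - (r - 1)² / 2`; above `1`, `x ≤ sinh x` at
`x = log r` gives `log r ≤ (r - r⁻¹) / 2`. Both say
`log a - log b ≤ (a - b) / b - (a - b)² / (2 b max a b)`, and `max a b ≤ 1 + t`.
-/

namespace Real

theorem log_le_half_sub_inv {r : ℝ} (hr : 1 ≤ r) : log r ≤ (r - r⁻¹) / 2 := by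
  rw [← sinh_log (by linarith)]
  exact self_le_sinh_iff.2 (log_nonneg hr)

theorem log_one_sub_le_neg_sub_sq_div_two {s : ℝ} (hs₀ : 0 ≤ s) (hs₁ : s < 1) :
    log (1 - s) ≤ -s - s ^ 2 / 2 := by
  have hsum := hasSum_pow_div_log_of_abs_lt_one (by rwa [abs_of_nonneg hs₀])
  have hpartial : ∑ i ∈ Finset.range 2, s ^ (i + 1) / (i + 1) ≤ -log (1 - s) :=
    sum_le_hasSum _ (fun n _ => by positivity) hsum
  norm_num [Finset.sum_range_succ] at hpartial
  linarith

theorem log_sub_log_le_sq_div_max {a b : ℝ} (ha : 0 < a) (hb : 0 < b) :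
    log a - log b ≤ (a - b) / b - (a - b) ^ 2 / (2 * b * max a b) := by
  rw [← log_div ha.ne' hb.ne']
  rcases le_total b a with hba | hab
  · have h := log_le_half_sub_inv ((one_le_div hb).2 hba)
    rw [max_eq_left hba]
    convert h using 1
    field_simp
    ring
  · have h := log_one_sub_le_neg_sub_sq_div_two (s := (b - a) / b)
      (div_nonneg (by linarith) hb.le) ((div_lt_one hb).2 (by linarith))
    rw [max_eq_right hab]
    convert h using 1
    · congr 1
      field_simp
      ring
    · field_simp
      ring

end Real

theorem klein_log_lower_bound_general (t x y : ℝ)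
    (hx : x ∈ Icc 0 1) (hy : y ∈ Icc 0 1)
    (htx : 0 < t + x) (hty : 0 < t + y) :
    (x - y) ^ 2 / (2 * (1 + t) * (t + y)) ≤
      -(Real.log (t + x) - Real.log (t + y) - (x - y) / (t + y)) := by
  have hlog := Real.log_sub_log_le_sq_div_max htx hty
  have hmax : max (t + x) (t + y) ≤ 1 + t := max_le (by linarith [hx.2]) (by linarith [hy.2])
  have hdiff : t + x - (t + y) = x - y := by ring
  rw [hdiff] at hlog
  have hbound : (x - y) ^ 2 / (2 * (1 + t) * (t + y)) ≤
      (x - y) ^ 2 / (2 * (t + y) * max (t + x) (t + y)) := by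
    rw [mul_right_comm]
    gcongr
  linarith

/-- Pointwise Klein-type lower bound for `φ(x) = -log (t+x)`: for `t ≥ 0` and
`x, y ∈ [0,1]` with `t + x > 0` and `t + y > 0`,
`-(log (t+x) - log (t+y) - (x-y)/(t+y)) ≥ (x-y)² / (2 (1+t) (t+y))`. -/
theorem klein_log_lower_bound (t x y : ℝ) (ht : 0 ≤ t)
    (hx : x ∈ Icc 0 1) (hy : y ∈ Icc 0 1)
    (htx : 0 < t + x) (hty : 0 < t + y) :
    (x - y) ^ 2 / (2 * (1 + t) * (t + y)) ≤
      -(Real.log (t + x) - Real.log (t + y) - (x - y) / (t + y)) :=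
  klein_log_lower_bound_general t x y hx hy htx hty
end

section
/- For t > 0 and x, y ∈ (0,1), one has −(log(t+x) − log(t+y) − (x−y)/(t+y)) ≤ (x−y)² · (1 − log(t/(t+y)))/(t+y)². -/
/-!
With `w = (t + x) / (t + y)` and `c = t / (t + y)` the claim reads
`w - 1 - log w ≤ (w - 1)² (1 - log c)`, where `0 < c ≤ min w 1`.
For `w ≤ 1` the weight `1 - log c` may be replaced by the smaller `1 - log w`, and the resulting
inequality is `w - 1 ≤ w log w` multiplied by `2 - w ≥ 0`. For `w ≥ 1` one has
`w - 1 - log w ≤ (w - 1)² / w ≤ (w - 1)²`, again by `1 - 1/w ≤ log w`.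
-/

open Set

namespace Real

theorem sub_one_sub_log_le_sq_mul_one_sub_log {w : ℝ} (h0 : 0 ≤ w) (h2 : w ≤ 2) :
    w - 1 - log w ≤ (w - 1) ^ 2 * (1 - log w) := by
  -- the difference of the two sides is `(2 - w) (w log w - (w - 1))`
  nlinarith [mul_le_mul_of_nonneg_left (self_sub_one_le_mul_log h0) (sub_nonneg.2 h2)]

theorem sub_one_sub_log_le_sq_div {w : ℝ} (hw : 0 < w) :
    w - 1 - log w ≤ (w - 1) ^ 2 / w := by
  have hlog := one_sub_inv_le_log_of_pos hw
  have hsq : (w - 1) ^ 2 / w = w - 1 - (1 - w⁻¹) := by field_simp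
  linarith

theorem sub_one_sub_log_le_sq_mul_one_sub_log_of_le {w c : ℝ} (hc : 0 < c) (hc1 : c ≤ 1)
    (hcw : c ≤ w) : w - 1 - log w ≤ (w - 1) ^ 2 * (1 - log c) := by
  rcases le_total w 1 with hw1 | hw1
  · calc w - 1 - log w ≤ (w - 1) ^ 2 * (1 - log w) :=
          sub_one_sub_log_le_sq_mul_one_sub_log (hc.le.trans hcw) (by linarith)
      _ ≤ (w - 1) ^ 2 * (1 - log c) := by gcongr
  · calc w - 1 - log w ≤ (w - 1) ^ 2 / w := sub_one_sub_log_le_sq_div (by linarith)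
      _ ≤ (w - 1) ^ 2 := div_le_self (sq_nonneg _) hw1
      _ ≤ (w - 1) ^ 2 * (1 - log c) :=
          le_mul_of_one_le_right (sq_nonneg _) (by linarith [log_nonpos hc.le hc1])

end Real

/-- Pointwise Klein-type upper bound for `φ(x) = -log (t+x)`: for `t > 0` and `x, y ∈ (0,1)`,
`-(log (t+x) - log (t+y) - (x-y)/(t+y)) ≤ (x-y)² (1 - log (t/(t+y))) / (t+y)²`. -/
theorem klein_log_upper_bound (t x y : ℝ) (ht : 0 < t)
    (hx : x ∈ Ioo 0 1) (hy : y ∈ Ioo 0 1) :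
    -(Real.log (t + x) - Real.log (t + y) - (x - y) / (t + y)) ≤
      (x - y) ^ 2 * (1 - Real.log (t / (t + y))) / (t + y) ^ 2 := by
  have hty : 0 < t + y := by linarith [hy.1]
  have htx : 0 < t + x := by linarith [hx.1]
  have hc1 : t / (t + y) ≤ 1 := (div_le_one hty).2 (by linarith [hy.1])
  have hcw : t / (t + y) ≤ (t + x) / (t + y) := by gcongr; linarith [hx.1]
  have key := Real.sub_one_sub_log_le_sq_mul_one_sub_log_of_le (by positivity) hc1 hcw
  have hw1 : (t + x) / (t + y) - 1 = (x - y) / (t + y) := by field_simp; ring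
  rw [Real.log_div htx.ne' hty.ne', hw1, div_pow] at key
  calc -(Real.log (t + x) - Real.log (t + y) - (x - y) / (t + y))
      = (x - y) / (t + y) - (Real.log (t + x) - Real.log (t + y)) := by ring
    _ ≤ _ := key
    _ = _ := by ring
end

section
/- For φ(x) = x², the relative entropy H(A,B) = tr(A² − B² − 2B(A−B)) = tr((A−B)²) = ‖A−B‖²_HS, and it satisfies monotonicity: for every contraction X (X*X ≤ 1) and Hermitian matrices 0 ≤ A, B ≤ 1, tr((XAX* − XBX*)²) ≤ tr((A−B)²). -/
/-!
With `C = A - B` and `P = X* X`, cyclicity of the trace turns `tr ((X C X*)²)` into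
`tr (C P C · P)`. For `S ≥ 0` the functional `M ↦ tr (S M)` is monotone, so `P ≤ 1` gives
`tr (C P C · P) ≤ tr (C P C) = tr (C² · P) ≤ tr (C²)`.
-/

open ComplexOrder Matrix

open scoped MatrixOrder

namespace Matrix

variable {𝕜 ι κ : Type*} [RCLike 𝕜] [Fintype ι]

lemma PosSemidef.trace_mul_nonneg {M N : Matrix ι ι 𝕜} (hM : M.PosSemidef) (hN : N.PosSemidef) :
    0 ≤ (M * N).trace := by
  classical
  obtain ⟨Y, rfl⟩ := CStarAlgebra.nonneg_iff_eq_star_mul_self.mp hN.nonneg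
  rw [star_eq_conjTranspose, ← Matrix.mul_assoc, trace_mul_comm, ← Matrix.mul_assoc]
  exact (hM.mul_mul_conjTranspose_same Y).trace_nonneg

lemma PosSemidef.trace_mul_le_trace_mul {S M N : Matrix ι ι 𝕜} (hS : S.PosSemidef) (hMN : M ≤ N) :
    (S * M).trace ≤ (S * N).trace := by
  have h := hS.trace_mul_nonneg hMN
  rwa [Matrix.mul_sub, trace_sub, sub_nonneg] at h

lemma trace_conj_mul_conj_le [Fintype κ] [DecidableEq ι] {C : Matrix ι ι 𝕜} (hC : C.IsHermitian)
    {X : Matrix κ ι 𝕜} (hX : Xᴴ * X ≤ 1) :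
    (X * C * Xᴴ * (X * C * Xᴴ)).trace ≤ (C * C).trace := by
  set P := Xᴴ * X
  have hCPC : (C * P * C).PosSemidef := by
    simpa only [hC.eq] using (posSemidef_conjTranspose_mul_self X).mul_mul_conjTranspose_same C
  have hCC : (C * C).PosSemidef := by
    simpa only [hC.eq] using posSemidef_conjTranspose_mul_self C
  calc (X * C * Xᴴ * (X * C * Xᴴ)).trace = (C * P * C * P).trace := by
        simp only [P, Matrix.mul_assoc]; rw [trace_mul_comm X]; simp only [Matrix.mul_assoc]
    _ ≤ (C * P * C * 1).trace := hCPC.trace_mul_le_trace_mul hX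
    _ = (C * C * P).trace := by
        rw [Matrix.mul_one, trace_mul_comm]; simp only [Matrix.mul_assoc]
    _ ≤ (C * C * 1).trace := hCC.trace_mul_le_trace_mul hX
    _ = (C * C).trace := by rw [Matrix.mul_one]

end Matrix

theorem relative_entropy_sq_monotone_general {n m : ℕ}
    (X : Matrix (Fin m) (Fin n) ℂ) (hX : (1 - Xᴴ * X).PosSemidef)
    (A B : Matrix (Fin n) (Fin n) ℂ)
    (hA : IsSelfAdjoint A) (hB : IsSelfAdjoint B) :
    ((X * A * Xᴴ - X * B * Xᴴ) * (X * A * Xᴴ - X * B * Xᴴ)).trace ≤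
      ((A - B) * (A - B)).trace := by
  rw [← Matrix.sub_mul, ← Matrix.mul_sub]
  exact trace_conj_mul_conj_le (hA.sub hB) hX

/-- For `φ(x) = x²`, the relative entropy is `H(A,B) = tr ((A-B)²) = ‖A-B‖²_HS`, and it is
monotone: for every contraction `X` (i.e. `X*X ≤ 1`) and Hermitian `0 ≤ A, B ≤ 1`,
`tr ((XAX* - XBX*)²) ≤ tr ((A-B)²)`. -/
theorem relative_entropy_sq_monotone {n m : ℕ}
    (X : Matrix (Fin m) (Fin n) ℂ) (hX : (1 - Xᴴ * X).PosSemidef)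
    (A B : Matrix (Fin n) (Fin n) ℂ)
    (hA : IsSelfAdjoint A) (hB : IsSelfAdjoint B)
    (hApos : A.PosSemidef) (hAle : (1 - A).PosSemidef)
    (hBpos : B.PosSemidef) (hBle : (1 - B).PosSemidef) :
    ((X * A * Xᴴ - X * B * Xᴴ) * (X * A * Xᴴ - X * B * Xᴴ)).trace ≤
      ((A - B) * (A - B)).trace :=
  relative_entropy_sq_monotone_general X hX A B hA hB
end
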